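/- arXiv:2401.14618 — 4 statements merged into one kernel-verified Lean document; each statement's English description precedes it below -/
import Mathlib

section
/- Let K be a field with a nontrivial non-Archimedean absolute value |·|, let r > 0 be a real number, and let (c_n)_{n≥0} be a sequence in K, not all zero, with |c_n| r^n → 0; set N := K(f,r), the largest index n with |c_n| r^n = max_m |c_m| r^m. Then there exists ε > 0 such that for every sequence (d_n)_{n≥0} in K, not all zero, with |d_n| r^n → 0 and |c_n − d_n| < ε for all n ≤ N, the largest index n with |d_n| r^n = max_m |d_m| r^m is at least N. -/
/-!
Write `A = ‖c N‖ rᴺ > 0` and take `ε = min ‖c N‖ (A / max 1 r ^ N)`. In an ultrametric field a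
perturbation of norm `< ‖c N‖` does not change `‖c N‖`, so `‖d N‖ rᴺ = A`; for `m ≤ N` either
`‖d m‖ = ‖c m‖`, or `‖d m‖ < ε` and then `‖d m‖ rᵐ ≤ ε · max 1 r ^ N ≤ A`. Hence `N` dominates all
earlier indices for `d`, while `‖d n‖ rⁿ → 0 < A` makes the set of maximal indices of `d` finite and
nonempty; its largest element cannot lie below `N`.
-/

open Filter

def IsLastArgmax {α : Type*} [LinearOrder α] (f : ℕ → α) (M : ℕ) : Prop :=
  (∀ m, f m ≤ f M) ∧ ∀ m, M < m → f m < f M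

section LastArgmax

variable {α : Type*} [LinearOrder α] {f : ℕ → α}

theorem exists_isLastArgmax_of_eventually_lt {n₀ : ℕ} (h : ∀ᶠ n in atTop, f n < f n₀) :
    ∃ M, IsLastArgmax f M := by
  classical
  obtain ⟨n₁, hn₁⟩ := eventually_atTop.mp h
  have hn₀ : n₀ < n₁ := not_le.mp fun hle => lt_irrefl _ (hn₁ n₀ hle)
  obtain ⟨b, hb, hbmax⟩ :=
    (Finset.range n₁).exists_max_image f ⟨n₀, Finset.mem_range.mpr hn₀⟩
  have hb_isMax : ∀ m, f m ≤ f b := fun m => by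
    rcases lt_or_ge m n₁ with hm | hm
    · exact hbmax m (Finset.mem_range.mpr hm)
    · exact (hn₁ m hm).le.trans (hbmax n₀ (Finset.mem_range.mpr hn₀))
  set M := Nat.findGreatest (fun n => ∀ m, f m ≤ f n) n₁
  have hM : ∀ m, f m ≤ f M :=
    Nat.findGreatest_spec (P := fun n => ∀ m, f m ≤ f n) (Finset.mem_range.mp hb).le hb_isMax
  refine ⟨M, hM, fun m hm => ?_⟩
  have hm_not_max : ¬ ∀ k, f k ≤ f m := by
    rcases le_or_gt m n₁ with hle | hlt
    · exact Nat.findGreatest_is_greatest hm hle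
    · exact fun hmax => (hn₁ m hlt.le).not_ge (hmax n₀)
  obtain ⟨k, hk⟩ := not_forall.mp hm_not_max
  exact (not_le.mp hk).trans_le (hM k)

theorem IsLastArgmax.le_of_forall_le {M N : ℕ} (hM : IsLastArgmax f M)
    (hN : ∀ m ≤ N, f m ≤ f N) : N ≤ M := by
  by_contra! hlt
  exact (hM.2 N hlt).not_ge (hN M hlt.le)

end LastArgmax

namespace IsUltrametricDist

variable {E : Type*} [SeminormedAddGroup E] [IsUltrametricDist E]

theorem norm_eq_of_norm_sub_lt {a b : E} (h : ‖a - b‖ < ‖a‖) : ‖b‖ = ‖a‖ := by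
  have h' : ‖a + -b‖ < max ‖a‖ ‖-b‖ := by
    rw [← sub_eq_add_neg]
    exact h.trans_le (le_max_left _ _)
  rw [← norm_neg b, norm_eq_of_add_norm_lt_max h']

theorem norm_mul_le_of_norm_sub_lt {a b : E} {ρ δ A : ℝ} (hρ : 0 ≤ ρ) (ha : ‖a‖ * ρ ≤ A)
    (hδ : δ * ρ ≤ A) (hab : ‖a - b‖ < δ) : ‖b‖ * ρ ≤ A := by
  rcases lt_or_ge ‖a - b‖ ‖a‖ with hlt | hge
  · rwa [norm_eq_of_norm_sub_lt hlt]
  · have hb : ‖b‖ < δ :=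
      calc ‖b‖ = ‖-(a - b) + a‖ := by rw [neg_sub, sub_add_cancel]
        _ ≤ max ‖-(a - b)‖ ‖a‖ := norm_add_le_max _ _
        _ = ‖a - b‖ := by rw [norm_neg, max_eq_left hge]
        _ < δ := hab
    exact (mul_le_mul_of_nonneg_right hb.le hρ).trans hδ

end IsUltrametricDist

open IsUltrametricDist in
theorem largest_dominant_index_lower_semicontinuous_general
    {K : Type*} [NontriviallyNormedField K] [IsUltrametricDist K]
    (r : ℝ) (hr : 0 < r) (c : ℕ → K)
    (N : ℕ)
    (hNmax : ∀ m, ‖c m‖ * r ^ m ≤ ‖c N‖ * r ^ N)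
    (hNlast : ∀ m, N < m → ‖c m‖ * r ^ m < ‖c N‖ * r ^ N) :
    ∃ ε > (0 : ℝ), ∀ d : ℕ → K, d ≠ 0 →
      Tendsto (fun n => ‖d n‖ * r ^ n) atTop (nhds 0) →
      (∀ n ≤ N, ‖c n - d n‖ < ε) →
      ∃ M, N ≤ M ∧ (∀ m, ‖d m‖ * r ^ m ≤ ‖d M‖ * r ^ M) ∧
        ∀ m, M < m → ‖d m‖ * r ^ m < ‖d M‖ * r ^ M := by
  set A := ‖c N‖ * r ^ N
  have hA : 0 < A := (mul_nonneg (norm_nonneg _) (pow_nonneg hr.le _)).trans_lt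
    (hNlast (N + 1) N.lt_succ_self)
  have hR : 0 < max 1 r ^ N := pow_pos (lt_max_of_lt_left one_pos) N
  set ε := min ‖c N‖ (A / max 1 r ^ N)
  have hε_rpow : ∀ m ≤ N, ε * r ^ m ≤ A := fun m hm =>
    calc ε * r ^ m ≤ A / max 1 r ^ N * max 1 r ^ N :=
          mul_le_mul (min_le_right _ _)
            ((pow_le_pow_left₀ hr.le (le_max_right 1 r) m).trans
              (pow_le_pow_right₀ (le_max_left 1 r) hm))
            (pow_nonneg hr.le m) (div_pos hA hR).le
      _ = A := div_mul_cancel₀ A hR.ne'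
  refine ⟨ε, lt_min (pos_of_mul_pos_left hA (pow_nonneg hr.le N)) (div_pos hA hR),
    fun d _ hd0 hclose => ?_⟩
  have hdN : ‖d N‖ = ‖c N‖ :=
    norm_eq_of_norm_sub_lt ((hclose N le_rfl).trans_le (min_le_left _ _))
  have hdom : ∀ m ≤ N, ‖d m‖ * r ^ m ≤ ‖d N‖ * r ^ N := fun m hm => by
    rw [hdN]
    exact norm_mul_le_of_norm_sub_lt (pow_nonneg hr.le m) (hNmax m) (hε_rpow m hm) (hclose m hm)
  obtain ⟨M, hM⟩ := exists_isLastArgmax_of_eventually_lt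
    (hd0.eventually_lt_const (show 0 < ‖d N‖ * r ^ N by rwa [hdN]))
  exact ⟨M, hM.le_of_forall_le hdom, hM⟩

/-- Let `K` be a field with a nontrivial non-Archimedean absolute value, `r > 0`, and
`(c_n)` a not-identically-zero sequence with `‖c n‖ * r ^ n → 0`; let `N` be the largest
index where `‖c n‖ * r ^ n` attains its maximum. Then there is `ε > 0` such that for any
not-identically-zero sequence `(d_n)` with `‖d n‖ * r ^ n → 0` and `‖c n - d n‖ < ε` for
all `n ≤ N`, the largest index where `‖d n‖ * r ^ n` attains its maximum is at least `N`. -/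
theorem largest_dominant_index_lower_semicontinuous
    {K : Type*} [NontriviallyNormedField K] [IsUltrametricDist K]
    (r : ℝ) (hr : 0 < r) (c : ℕ → K) (hc : c ≠ 0)
    (hc0 : Tendsto (fun n => ‖c n‖ * r ^ n) atTop (nhds 0))
    (N : ℕ)
    (hNmax : ∀ m, ‖c m‖ * r ^ m ≤ ‖c N‖ * r ^ N)
    (hNlast : ∀ m, N < m → ‖c m‖ * r ^ m < ‖c N‖ * r ^ N) :
    ∃ ε > (0 : ℝ), ∀ d : ℕ → K, d ≠ 0 →
      Tendsto (fun n => ‖d n‖ * r ^ n) atTop (nhds 0) →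
      (∀ n ≤ N, ‖c n - d n‖ < ε) →
      ∃ M, N ≤ M ∧ (∀ m, ‖d m‖ * r ^ m ≤ ‖d M‖ * r ^ M) ∧
        ∀ m, M < m → ‖d m‖ * r ^ m < ‖d M‖ * r ^ M :=
  largest_dominant_index_lower_semicontinuous_general r hr c N hNmax hNlast
end

section
/- Let K be an algebraically closed field of prime characteristic p, complete with respect to a nontrivial non-Archimedean absolute value. Let f(x) = ∑_{n≥1} b_n x^n be a power series converging on a ball D around 0, and assume f is not additive, i.e., f(x+a) ≠ f(x) + f(a) for some x, a, x+a ∈ D. Then: (1) the set E := {e ∈ ℕ : there exists n > 1 with p ∤ n and b_{n p^e} ≠ 0} is nonempty; (2) setting l := min E, for every k < l, every m ≥ 1 with p ∤ m, and every a ∈ D, the coefficient b_{m p^k, a} of x^{m p^k} in the expansion of f_a at 0 equals b_{m p^k}, independently of a; and (3) the map a ↦ b_{p^l, a} is not constant on any ball around 0 contained in D, so {b_{p^l, a} : a ∈ D'} is infinite for every ball D' ⊆ D around 0; in particular N_+(f) = p^l. -/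
/-!
Expanding `(x + a) ^ (n + t)` binomially, the coefficient of `x ^ n` in `f (x + a)` is
`∑ₜ C(n + t, n) b (n + t) a ^ t`; in an ultrametric field the double series converges because its
terms tend to `0`. In characteristic `p`, Lucas' theorem kills `C(j, m p^k)` as soon as
`p^(k+1) ∣ j`. Below the level `l = min E` every `j > p^k` in the support of `b` is such a
multiple, so the coefficients of index `m p^k` do not move under translation. At level `l` the term
with `j = m₀ p^l` survives because `C(m₀ p^l, p^l) ≡ m₀ [MOD p]`, so `a ↦ b_{p^l, a}` is a
nonconstant power series, which by the identity theorem takes infinitely many values near `0`.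
If `E` were empty, `b` would be supported on powers of `p` and `f` would be additive by Frobenius.
-/

open Filter Topology FormalMultilinearSeries

namespace Nat

variable {p : ℕ} [Fact p.Prime]

theorem choose_mul_pow_modEq_choose_div_pow (k : ℕ) :
    ∀ n c : ℕ, n.choose (c * p ^ k) ≡ (n / p ^ k).choose c [MOD p] := by
  induction k with
  | zero => simp [Nat.ModEq.refl]
  | succ k ih =>
    intro n c
    have hp : 0 < p := (Fact.out : p.Prime).pos
    have hlucas := Choose.choose_modEq_choose_mod_mul_choose_div_nat (p := p) (n := n)
      (k := c * p ^ (k + 1))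
    rw [pow_succ, ← mul_assoc, Nat.mul_mod_left, Nat.mul_div_cancel _ hp, Nat.choose_zero_right,
      one_mul] at hlucas
    have := hlucas.trans (ih (n / p) c)
    rwa [Nat.div_div_eq_div_mul, ← pow_succ', mul_assoc, ← pow_succ] at this

theorem prime_dvd_choose_mul_pow {j m k : ℕ} (hj : p ^ (k + 1) ∣ j) (hm : ¬ p ∣ m) :
    p ∣ j.choose (m * p ^ k) := by
  obtain ⟨q, rfl⟩ := hj
  have hp : 0 < p := (Fact.out : p.Prime).pos
  have hdiv : p ^ (k + 1) * q / p ^ k = p * q := by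
    rw [show p ^ (k + 1) * q = p * q * p ^ k by ring]
    exact Nat.mul_div_cancel _ (pow_pos hp k)
  have hlucas := Choose.choose_modEq_choose_mod_mul_choose_div_nat (p := p) (n := p * q) (k := m)
  have hmp : 0 < m % p := Nat.pos_of_ne_zero (mt Nat.dvd_of_mod_eq_zero hm)
  rw [Nat.mul_mod_right, Nat.choose_eq_zero_of_lt hmp, zero_mul] at hlucas
  rw [← Nat.modEq_zero_iff_dvd]
  exact (choose_mul_pow_modEq_choose_div_pow k _ m).trans (hdiv ▸ hlucas)

theorem choose_mul_pow_pow_modEq (m k : ℕ) : (m * p ^ k).choose (p ^ k) ≡ m [MOD p] := by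
  have hp : 0 < p := (Fact.out : p.Prime).pos
  simpa [Nat.mul_div_cancel _ (pow_pos hp k)] using
    choose_mul_pow_modEq_choose_div_pow (p := p) k (m * p ^ k) 1

end Nat

theorem eventually_eq_of_continuousAt_of_finite_image {X Y : Type*} [TopologicalSpace X]
    [TopologicalSpace Y] [T1Space Y] {f : X → Y} {s : Set X} {x : X} (hs : s ∈ 𝓝 x)
    (hf : ContinuousAt f x) (hfin : (f '' s).Finite) : ∀ᶠ z in 𝓝 x, f z = f x := by
  have hopen : IsOpen (f '' s \ {f x})ᶜ := hfin.sdiff.isClosed.isOpen_compl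
  filter_upwards [hs, hf (hopen.mem_nhds (by simp))] with z hzs hz
  by_contra hne
  exact hz ⟨Set.mem_image_of_mem f hzs, hne⟩

section PowerSeries

variable {K : Type*} [NontriviallyNormedField K] {c d : ℕ → K} {F : K → K} {r : ℝ}

theorem hasFPowerSeriesAt_ofScalars_of_hasSum (hr : 0 < r)
    (h : ∀ x : K, ‖x‖ < r → HasSum (fun n => c n * x ^ n) (F x)) :
    HasFPowerSeriesAt F (ofScalars K c) 0 := by
  obtain ⟨x₀, hx₀, hx₀r⟩ := NormedField.exists_norm_lt K hr
  refine ⟨‖x₀‖₊, ?_, by simpa using hx₀, fun {y} hy => ?_⟩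
  · refine (ofScalars K c).le_radius_of_tendsto (l := 0) ?_
    simpa [ofScalars_norm] using (h x₀ hx₀r).summable.tendsto_atTop_zero.norm
  · have hy : ‖y‖ < ‖x₀‖ := by simpa using hy
    simpa [ofScalars_apply_eq, mul_comm] using h y (hy.trans hx₀r)

theorem eq_of_hasSum_mul_pow (hr : 0 < r)
    (hc : ∀ x : K, ‖x‖ < r → HasSum (fun n => c n * x ^ n) (F x))
    (hd : ∀ x : K, ‖x‖ < r → HasSum (fun n => d n * x ^ n) (F x)) : c = d :=
  ofScalars_series_injective K K
    ((hasFPowerSeriesAt_ofScalars_of_hasSum hr hc).eq_formalMultilinearSeries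
      (hasFPowerSeriesAt_ofScalars_of_hasSum hr hd))

theorem infinite_image_of_hasSum_mul_pow (hr : 0 < r)
    (h : ∀ x : K, ‖x‖ < r → HasSum (fun n => c n * x ^ n) (F x)) {t : ℕ} (ht : t ≠ 0)
    (hct : c t ≠ 0) : (F '' {a | ‖a‖ < r}).Infinite := by
  intro hfin
  have hF := hasFPowerSeriesAt_ofScalars_of_hasSum hr h
  have hball : {a : K | ‖a‖ < r} ∈ 𝓝 0 := by
    simpa [Metric.ball, dist_eq_norm] using Metric.ball_mem_nhds (0 : K) hr
  have hconst := hF.eq_formalMultilinearSeries_of_eventually hasFPowerSeriesAt_const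
    (eventually_eq_of_continuousAt_of_finite_image hball hF.continuousAt hfin)
  apply hct
  simpa [constFormalMultilinearSeries_apply_of_nonzero ht, ofScalars_eq_zero] using
    congrArg (· t) hconst

end PowerSeries

theorem NonarchimedeanAddGroup.summable_of_norm_le {ι E : Type*} [NormedAddCommGroup E]
    [IsUltrametricDist E] [CompleteSpace E] {f : ι → E} {g : ι → ℝ}
    (hg : Tendsto g cofinite (𝓝 0)) (hfg : ∀ i, ‖f i‖ ≤ g i) : Summable f :=
  summable_of_tendsto_cofinite_zero (squeeze_zero_norm hfg hg)

theorem tendsto_add_cofinite_cofinite :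
    Tendsto (fun nt : ℕ × ℕ => nt.1 + nt.2) cofinite cofinite :=
  Tendsto.cofinite_of_finite_preimage_singleton fun m =>
    (Finset.HasAntidiagonal.antidiagonal m).finite_toSet.subset fun nt h => by simpa using h

section Translate

variable {K : Type*} [NontriviallyNormedField K] {b : ℕ → K} {a x : K}

/-- For `n ≠ 0` this is the paper's `b_{n,a}`; at `n = 0` it is `f a`, not `0`
(see `eq_update_translateCoeff`). -/
noncomputable def translateCoeff (b : ℕ → K) (a : K) (n : ℕ) : K :=
  ∑' t, ((n + t).choose n : K) * b (n + t) * a ^ t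

theorem translateCoeff_zero (b : ℕ → K) (a : K) : translateCoeff b a 0 = ∑' m, b m * a ^ m := by
  simp [translateCoeff]

variable [IsUltrametricDist K] [CompleteSpace K]

theorem summable_translateCoeff (ha : Summable fun m => b m * a ^ m) (n : ℕ) :
    Summable fun t => ((n + t).choose n : K) * b (n + t) * a ^ t := by
  rcases eq_or_ne a 0 with rfl | ha0
  · exact summable_of_ne_finset_zero (s := {0}) fun t ht => by simp_all
  refine NonarchimedeanAddGroup.summable_of_norm_le
    (g := fun t => ‖b (n + t) * a ^ (n + t)‖ / ‖a‖ ^ n) ?_ fun t => ?_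
  · simpa using
      (ha.comp_injective (add_right_injective n)).tendsto_cofinite_zero.norm.div_const (‖a‖ ^ n)
  · rw [le_div_iff₀ (by positivity), norm_mul, norm_mul, norm_mul, norm_pow, norm_pow, pow_add]
    calc ‖((n + t).choose n : K)‖ * ‖b (n + t)‖ * ‖a‖ ^ t * ‖a‖ ^ n
        ≤ 1 * ‖b (n + t)‖ * ‖a‖ ^ t * ‖a‖ ^ n := by
          gcongr; exact IsUltrametricDist.norm_natCast_le_one K _
      _ = ‖b (n + t)‖ * (‖a‖ ^ n * ‖a‖ ^ t) := by ring

theorem summable_translateCoeff_prod {z : K} (hz : Summable fun m => b m * z ^ m)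
    (hxz : ‖x‖ ≤ ‖z‖) (haz : ‖a‖ ≤ ‖z‖) :
    Summable fun nt : ℕ × ℕ =>
      ((nt.1 + nt.2).choose nt.1 : K) * b (nt.1 + nt.2) * a ^ nt.2 * x ^ nt.1 := by
  have hlim := hz.tendsto_cofinite_zero.norm.comp tendsto_add_cofinite_cofinite
  rw [norm_zero] at hlim
  refine NonarchimedeanAddGroup.summable_of_norm_le hlim fun ⟨n, t⟩ => ?_
  simp only [Function.comp, norm_mul, norm_pow]
  calc ‖((n + t).choose n : K)‖ * ‖b (n + t)‖ * ‖a‖ ^ t * ‖x‖ ^ n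
      ≤ 1 * ‖b (n + t)‖ * ‖z‖ ^ t * ‖z‖ ^ n := by
        gcongr; exact IsUltrametricDist.norm_natCast_le_one K _
    _ = ‖b (n + t)‖ * ‖z‖ ^ (n + t) := by ring

theorem hasSum_translateCoeff_mul_pow {ρ : ℝ}
    (hconv : ∀ x : K, ‖x‖ < ρ → Summable fun m => b m * x ^ m) (ha : ‖a‖ < ρ) (hx : ‖x‖ < ρ) :
    HasSum (fun n => translateCoeff b a n * x ^ n) (∑' m, b m * (x + a) ^ m) := by
  set g : ℕ × ℕ → K := fun nt =>
    ((nt.1 + nt.2).choose nt.1 : K) * b (nt.1 + nt.2) * a ^ nt.2 * x ^ nt.1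
  have hg : Summable g := by
    rcases le_total ‖x‖ ‖a‖ with h | h
    · exact summable_translateCoeff_prod (hconv a ha) h le_rfl
    · exact summable_translateCoeff_prod (hconv x hx) le_rfl h
  have hdiag (m : ℕ) :
      ∑ nt ∈ Finset.HasAntidiagonal.antidiagonal m, g nt = b m * (x + a) ^ m := by
    rw [Finset.Nat.sum_antidiagonal_eq_sum_range_succ_mk, add_pow, Finset.mul_sum]
    refine Finset.sum_congr rfl fun k hk => ?_
    simp only [g, Nat.add_sub_cancel' (Nat.lt_succ_iff.mp (Finset.mem_range.mp hk))]
    ring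
  have hsum : HasSum (fun m => b m * (x + a) ^ m) (∑' nt, g nt) :=
    (Finset.HasAntidiagonal.sigmaAntidiagonalEquivProd.hasSum_iff.mpr hg.hasSum).sigma
      fun m => hdiag m ▸ (Finset.HasAntidiagonal.antidiagonal m).hasSum _
  rw [hsum.tsum_eq]
  exact hg.hasSum.prod_fiberwise fun n =>
    (summable_translateCoeff (hconv a ha) n).hasSum.mul_right _

theorem eq_update_translateCoeff {ρ : ℝ} (hρ : 0 < ρ)
    (hconv : ∀ x : K, ‖x‖ < ρ → Summable fun m => b m * x ^ m) (ha : ‖a‖ < ρ) {c : ℕ → K}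
    (hc : ∀ x : K, ‖x‖ < ρ →
      HasSum (fun n => c n * x ^ n) ((∑' m, b m * (x + a) ^ m) - ∑' m, b m * a ^ m)) :
    c = Function.update (translateCoeff b a) 0 0 := by
  refine eq_of_hasSum_mul_pow hρ hc fun x hx => ?_
  have h := (hasSum_translateCoeff_mul_pow hconv ha hx).update 0 0
  rw [translateCoeff_zero, pow_zero, mul_one, zero_sub, neg_add_eq_sub] at h
  have hfun : (fun n => Function.update (translateCoeff b a) 0 0 n * x ^ n) =
      Function.update (fun n => translateCoeff b a n * x ^ n) 0 0 := by
    ext n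
    rcases eq_or_ne n 0 with rfl | hn <;> simp [*]
  rwa [hfun]

end Translate

section CharP

variable {R : Type*}

def nonadditiveExponents [Zero R] (p : ℕ) (b : ℕ → R) : Set ℕ :=
  {e | ∃ m, 1 < m ∧ ¬ p ∣ m ∧ b (m * p ^ e) ≠ 0}

variable {p : ℕ} [Fact p.Prime]

theorem mul_add_pow_of_nonadditiveExponents_eq_empty [CommRing R] [CharP R p] {b : ℕ → R}
    (hE : nonadditiveExponents p b = ∅) (hb0 : b 0 = 0) (n : ℕ) (x a : R) :
    b n * (x + a) ^ n = b n * x ^ n + b n * a ^ n := by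
  rcases eq_or_ne n 0 with rfl | hn
  · simp [hb0]
  obtain ⟨e, m, hm, rfl⟩ := Nat.exists_eq_pow_mul_and_not_dvd hn p (Fact.out : p.Prime).ne_one
  rcases eq_or_ne m 1 with rfl | hm1
  · rw [mul_one, add_pow_char_pow, mul_add]
  have hb : b (p ^ e * m) = 0 := by
    by_contra hb
    have he : e ∈ nonadditiveExponents p b :=
      ⟨m, by have := right_ne_zero_of_mul hn; omega, hm, by rwa [mul_comm]⟩
    simp [hE] at he
  simp [hb]

theorem tsum_add_of_nonadditiveExponents_eq_empty [CommRing R] [TopologicalSpace R]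
    [ContinuousAdd R] [T2Space R] [CharP R p] {b : ℕ → R}
    (hE : nonadditiveExponents p b = ∅) (hb0 : b 0 = 0) {x a : R}
    (hx : Summable fun n => b n * x ^ n) (ha : Summable fun n => b n * a ^ n) :
    ∑' n, b n * (x + a) ^ n = ∑' n, b n * x ^ n + ∑' n, b n * a ^ n := by
  rw [← hx.tsum_add ha]
  exact tsum_congr fun n => mul_add_pow_of_nonadditiveExponents_eq_empty hE hb0 n x a

theorem pow_succ_dvd_of_lt_sInf_nonadditiveExponents [Zero R] {b : ℕ → R} {k j : ℕ}
    (hk : k < sInf (nonadditiveExponents p b)) (hj : b j ≠ 0) (hkj : p ^ k < j) :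
    p ^ (k + 1) ∣ j := by
  have hp : p.Prime := Fact.out
  obtain ⟨e, m, hm, rfl⟩ :=
    Nat.exists_eq_pow_mul_and_not_dvd (Nat.zero_lt_of_lt hkj).ne' p hp.ne_one
  suffices k < e from (pow_dvd_pow p this).mul_right m
  rcases eq_or_ne m 1 with rfl | hm1
  · rwa [mul_one, Nat.pow_lt_pow_iff_right hp.one_lt] at hkj
  have he : e ∈ nonadditiveExponents p b :=
    ⟨m, by have := right_ne_zero_of_mul (show p ^ e * m ≠ 0 by omega); omega, hm,
      by rwa [mul_comm]⟩
  exact hk.trans_le (Nat.sInf_le he)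

theorem exists_choose_mul_ne_zero_of_mem_nonadditiveExponents [CommRing R] [IsDomain R]
    [CharP R p] {b : ℕ → R} {e : ℕ} (he : e ∈ nonadditiveExponents p b) :
    ∃ t ≠ 0, ((p ^ e + t).choose (p ^ e) : R) * b (p ^ e + t) ≠ 0 := by
  obtain ⟨m, hm1, hm, hb⟩ := he
  have hidx : p ^ e + (m - 1) * p ^ e = m * p ^ e := by
    rw [add_comm, ← Nat.succ_mul, Nat.succ_eq_add_one, Nat.sub_add_cancel hm1.le]
  refine ⟨(m - 1) * p ^ e,
    mul_ne_zero (by omega) (pow_ne_zero _ (Fact.out : p.Prime).ne_zero), ?_⟩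
  rw [hidx]
  refine mul_ne_zero ?_ hb
  rwa [Ne, CharP.cast_eq_zero_iff R p, (Nat.choose_mul_pow_pow_modEq m e).dvd_iff dvd_rfl]

end CharP

section TranslateCharP

variable {K : Type*} [NontriviallyNormedField K] {p : ℕ} [Fact p.Prime] [CharP K p]
  {b : ℕ → K} {a : K}

theorem translateCoeff_mul_pow_of_lt_sInf {k m : ℕ} (hk : k < sInf (nonadditiveExponents p b))
    (hm0 : 1 ≤ m) (hm : ¬ p ∣ m) : translateCoeff b a (m * p ^ k) = b (m * p ^ k) := by
  rw [translateCoeff, tsum_eq_single 0 fun t ht => ?_]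
  · simp
  by_cases hb : b (m * p ^ k + t) = 0
  · simp [hb]
  have hkj : p ^ k < m * p ^ k + t := by
    have := Nat.le_mul_of_pos_left (p ^ k) hm0
    omega
  rw [(CharP.cast_eq_zero_iff K p _).mpr (Nat.prime_dvd_choose_mul_pow
    (pow_succ_dvd_of_lt_sInf_nonadditiveExponents hk hb hkj) hm)]
  simp

theorem translateCoeff_of_lt_pow_sInf {n : ℕ} (hn0 : n ≠ 0)
    (hn : n < p ^ sInf (nonadditiveExponents p b)) : translateCoeff b a n = b n := by
  have hp : p.Prime := Fact.out
  obtain ⟨k, m, hm, rfl⟩ := Nat.exists_eq_pow_mul_and_not_dvd hn0 p hp.ne_one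
  have hm0 : 0 < m := Nat.pos_of_ne_zero (right_ne_zero_of_mul hn0)
  have hk : k < sInf (nonadditiveExponents p b) := by
    rw [← Nat.pow_lt_pow_iff_right hp.one_lt]
    exact (Nat.le_mul_of_pos_right _ hm0).trans_lt hn
  rw [mul_comm]
  exact translateCoeff_mul_pow_of_lt_sInf hk hm0 hm

end TranslateCharP

theorem sInf_setOf_infinite_image_eq {α β : Type*} {v : ℕ → α → β} {s : Set α} {N : ℕ}
    (hN : (v N '' s).Infinite) (hlt : ∀ n < N, ∃ y, ∀ a ∈ s, v n a = y) :
    sInf {n | (v n '' s).Infinite} = N := by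
  refine le_antisymm (Nat.sInf_le hN) (le_csInf ⟨N, hN⟩ fun n hn => not_lt.mp fun hnN => hn ?_)
  obtain ⟨y, hy⟩ := hlt n hnN
  exact (Set.finite_singleton y).subset (by rintro _ ⟨a, ha, rfl⟩; exact hy a ha)

theorem nonadditive_series_translate_coefficients_general
    {K : Type*} [NontriviallyNormedField K] [IsUltrametricDist K]
    [CompleteSpace K]
    (p : ℕ) [Fact p.Prime] [CharP K p]
    (ρ : ℝ) (hρ : 0 < ρ) (b : ℕ → K) (hb0 : b 0 = 0)
    (hconv : ∀ x : K, ‖x‖ < ρ → Summable fun n => b n * x ^ n)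
    (hnadd : ∃ x a : K, ‖x‖ < ρ ∧ ‖a‖ < ρ ∧ ‖x + a‖ < ρ ∧
      (∑' n, b n * (x + a) ^ n) ≠ (∑' n, b n * x ^ n) + (∑' n, b n * a ^ n))
    (bc : ℕ → K → K)
    (hbc : ∀ a : K, ‖a‖ < ρ → ∀ x : K, ‖x‖ < ρ →
      HasSum (fun n => bc n a * x ^ n)
        ((∑' m, b m * (x + a) ^ m) - ∑' m, b m * a ^ m)) :
    {e : ℕ | ∃ m, 1 < m ∧ ¬ p ∣ m ∧ b (m * p ^ e) ≠ 0}.Nonempty ∧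
    (∀ k < sInf {e : ℕ | ∃ m, 1 < m ∧ ¬ p ∣ m ∧ b (m * p ^ e) ≠ 0},
      ∀ m, 1 ≤ m → ¬ p ∣ m → ∀ a : K, ‖a‖ < ρ → bc (m * p ^ k) a = b (m * p ^ k)) ∧
    (∀ ρ' : ℝ, 0 < ρ' → ρ' ≤ ρ →
      {y : K | ∃ a : K, ‖a‖ < ρ' ∧
        bc (p ^ sInf {e : ℕ | ∃ m, 1 < m ∧ ¬ p ∣ m ∧ b (m * p ^ e) ≠ 0}) a = y}.Infinite) ∧
    sInf {n : ℕ | {y : K | ∃ a : K, ‖a‖ < ρ ∧ bc n a = y}.Infinite}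
      = p ^ sInf {e : ℕ | ∃ m, 1 < m ∧ ¬ p ∣ m ∧ b (m * p ^ e) ≠ 0} := by
  rw [show {e : ℕ | ∃ m, 1 < m ∧ ¬ p ∣ m ∧ b (m * p ^ e) ≠ 0} = nonadditiveExponents p b from rfl]
  have hp : p.Prime := Fact.out
  have hbc_eq (a : K) (ha : ‖a‖ < ρ) : (bc · a) = Function.update (translateCoeff b a) 0 0 :=
    eq_update_translateCoeff hρ hconv ha (hbc a ha)
  have hne : (nonadditiveExponents p b).Nonempty := by
    obtain ⟨x, a, hx, ha, -, hnadd⟩ := hnadd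
    exact Set.nonempty_iff_ne_empty.mpr fun hE =>
      hnadd (tsum_add_of_nonadditiveExponents_eq_empty hE hb0 (hconv x hx) (hconv a ha))
  set l := sInf (nonadditiveExponents p b)
  have hconst : ∀ k < l, ∀ m, 1 ≤ m → ¬ p ∣ m → ∀ a : K, ‖a‖ < ρ →
      bc (m * p ^ k) a = b (m * p ^ k) := by
    intro k hk m hm0 hm a ha
    rw [congrFun (hbc_eq a ha), Function.update_of_ne (Nat.mul_pos hm0 (pow_pos hp.pos k)).ne']
    exact translateCoeff_mul_pow_of_lt_sInf hk hm0 hm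
  have hinf (ρ' : ℝ) (hρ' : 0 < ρ') (hle : ρ' ≤ ρ) :
      (bc (p ^ l) '' {a | ‖a‖ < ρ'}).Infinite := by
    obtain ⟨t, ht, hct⟩ := exists_choose_mul_ne_zero_of_mem_nonadditiveExponents (Nat.sInf_mem hne)
    refine infinite_image_of_hasSum_mul_pow (c := fun t => ((p ^ l + t).choose (p ^ l) : K) *
      b (p ^ l + t)) hρ' (fun a ha => ?_) ht hct
    rw [congrFun (hbc_eq a (ha.trans_le hle)), Function.update_of_ne (pow_ne_zero l hp.ne_zero)]
    exact (summable_translateCoeff (hconv a (ha.trans_le hle)) _).hasSum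
  refine ⟨hne, hconst, hinf, sInf_setOf_infinite_image_eq (hinf ρ hρ le_rfl) fun n hn => ?_⟩
  rcases eq_or_ne n 0 with rfl | hn0
  · exact ⟨0, fun a ha => by rw [congrFun (hbc_eq a ha), Function.update_self]⟩
  · exact ⟨b n, fun a ha => by
      rw [congrFun (hbc_eq a ha), Function.update_of_ne hn0, translateCoeff_of_lt_pow_sInf hn0 hn]⟩

/-- Let `K` be an algebraically closed field of prime characteristic `p`, complete with
respect to a nontrivial non-Archimedean absolute value. Let `f(x) = ∑_{n≥1} b_n x^n` be a
power series converging on the ball `D = {x : ‖x‖ < ρ}` which is not additive. For `a ∈ D`,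
`bc n a` denotes the `n`-th coefficient of the expansion at `0` of
`f_a(x) = f(x + a) - f(a)`. Then: (1) the set
`E = {e : ∃ m > 1, p ∤ m ∧ b (m * p ^ e) ≠ 0}` is nonempty; (2) with `l = min E`, for every
`k < l`, `m ≥ 1` with `p ∤ m`, and every `a ∈ D`, `bc (m * p ^ k) a = b (m * p ^ k)`;
(3) for every ball `D' ⊆ D` around `0`, the set `{bc (p ^ l) a : a ∈ D'}` is infinite; in
particular `N₊(f) = p ^ l`. -/
theorem nonadditive_series_translate_coefficients
    {K : Type*} [NontriviallyNormedField K] [IsUltrametricDist K]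
    [IsAlgClosed K] [CompleteSpace K]
    (p : ℕ) [Fact p.Prime] [CharP K p]
    (ρ : ℝ) (hρ : 0 < ρ) (b : ℕ → K) (hb0 : b 0 = 0)
    (hconv : ∀ x : K, ‖x‖ < ρ → Summable fun n => b n * x ^ n)
    (hnadd : ∃ x a : K, ‖x‖ < ρ ∧ ‖a‖ < ρ ∧ ‖x + a‖ < ρ ∧
      (∑' n, b n * (x + a) ^ n) ≠ (∑' n, b n * x ^ n) + (∑' n, b n * a ^ n))
    (bc : ℕ → K → K)
    (hbc : ∀ a : K, ‖a‖ < ρ → ∀ x : K, ‖x‖ < ρ →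
      HasSum (fun n => bc n a * x ^ n)
        ((∑' m, b m * (x + a) ^ m) - ∑' m, b m * a ^ m)) :
    {e : ℕ | ∃ m, 1 < m ∧ ¬ p ∣ m ∧ b (m * p ^ e) ≠ 0}.Nonempty ∧
    (∀ k < sInf {e : ℕ | ∃ m, 1 < m ∧ ¬ p ∣ m ∧ b (m * p ^ e) ≠ 0},
      ∀ m, 1 ≤ m → ¬ p ∣ m → ∀ a : K, ‖a‖ < ρ → bc (m * p ^ k) a = b (m * p ^ k)) ∧
    (∀ ρ' : ℝ, 0 < ρ' → ρ' ≤ ρ →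
      {y : K | ∃ a : K, ‖a‖ < ρ' ∧
        bc (p ^ sInf {e : ℕ | ∃ m, 1 < m ∧ ¬ p ∣ m ∧ b (m * p ^ e) ≠ 0}) a = y}.Infinite) ∧
    sInf {n : ℕ | {y : K | ∃ a : K, ‖a‖ < ρ ∧ bc n a = y}.Infinite}
      = p ^ sInf {e : ℕ | ∃ m, 1 < m ∧ ¬ p ∣ m ∧ b (m * p ^ e) ≠ 0} :=
  nonadditive_series_translate_coefficients_general p ρ hρ b hb0 hconv hnadd bc hbc
end

section
/- Let K be an algebraically closed field equipped with a valuation v : K* → Γ into a linearly ordered abelian group Γ (written additively), let δ ∈ Γ with δ > 0, and set X_δ := {x ∈ K* : −δ < v(x) < δ} and X_{2δ} := {x ∈ K* : −2δ < v(x) < 2δ}. Let (G,+) be an abelian group and let ψ : X_δ → G satisfy ψ(xy) = ψ(x) + ψ(y) whenever x, y, xy ∈ X_δ. Then: (1) every z ∈ X_{2δ} can be written as z = xy with x, y ∈ X_δ; (2) for any two factorizations z = xy = x'y' with x, y, x', y' ∈ X_δ one has ψ(x) + ψ(y) = ψ(x') + ψ(y'); and (3) the resulting well-defined map ψ̄ :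 X_{2δ} → G given by ψ̄(xy) := ψ(x) + ψ(y) satisfies ψ̄(zw) = ψ̄(z) + ψ̄(w) whenever z, w, zw ∈ X_{2δ}. -/
/-!
Every element of `X_{2δ}` is a square `s * s` with `s ∈ X_δ`, since `v` halves under square
roots and `K` is algebraically closed. If `x, y ∈ X_δ` and `s * s = x * y`, then `u := x * s⁻¹`
satisfies `u * u = x * y⁻¹`, so also `u ∈ X_δ`; writing `x = u * s` and `y = u⁻¹ * s` gives
`ψ x + ψ y = ψ s + ψ s`, which depends only on `x * y`. Additivity of the extension follows by
taking square roots of both factors.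
-/

namespace LocalHom

variable {M : Type*} {Γ : Type*} [AddCommGroup Γ] [LinearOrder Γ]

/-- The paper's `X_δ`. -/
def band (v : M → Γ) (δ : Γ) : Set M := {x | -δ < v x ∧ v x < δ}

theorem mem_band {v : M → Γ} {δ : Γ} {x : M} : x ∈ band v δ ↔ -δ < v x ∧ v x < δ := Iff.rfl

variable [CommGroup M] [IsOrderedAddMonoid Γ] {v : M → Γ} {G : Type*} [AddCommGroup G]

def IsLocalHomOn (ψ : M → G) (X : Set M) : Prop :=
  ∀ x y, x ∈ X → y ∈ X → x * y ∈ X → ψ (x * y) = ψ x + ψ y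

theorem IsLocalHomOn.map_one {ψ : M → G} {X : Set M} (hψ : IsLocalHomOn ψ X) (h1 : 1 ∈ X) :
    ψ 1 = 0 := by
  simpa using hψ 1 1 h1 h1 (by rwa [one_mul])

theorem IsLocalHomOn.map_add_map_inv {ψ : M → G} {X : Set M} (hψ : IsLocalHomOn ψ X)
    (h1 : 1 ∈ X) {u : M} (hu : u ∈ X) (hu' : u⁻¹ ∈ X) : ψ u + ψ u⁻¹ = 0 := by
  rw [← hψ u u⁻¹ hu hu' (by rwa [mul_inv_cancel]), mul_inv_cancel, hψ.map_one h1]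

theorem map_one_eq_zero (hv : ∀ x y, v (x * y) = v x + v y) : v 1 = 0 := by
  simpa using hv 1 1

theorem map_inv_eq_neg (hv : ∀ x y, v (x * y) = v x + v y) (x : M) : v x⁻¹ = -v x := by
  have h := hv x x⁻¹
  rw [mul_inv_cancel, map_one_eq_zero hv] at h
  exact eq_neg_of_add_eq_zero_right h.symm

theorem one_mem_band (hv : ∀ x y, v (x * y) = v x + v y) {δ : Γ} {x : M}
    (hx : x ∈ band v δ) : (1 : M) ∈ band v δ := by
  have hδ : 0 < δ := neg_lt_self_iff.mp (hx.1.trans hx.2)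
  rw [mem_band, map_one_eq_zero hv]
  exact ⟨neg_neg_of_pos hδ, hδ⟩

theorem inv_mem_band (hv : ∀ x y, v (x * y) = v x + v y) {δ : Γ} {x : M}
    (hx : x ∈ band v δ) : x⁻¹ ∈ band v δ := by
  rw [mem_band, map_inv_eq_neg hv]
  exact ⟨neg_lt_neg hx.2, neg_lt.mp hx.1⟩

theorem mul_mem_band_add (hv : ∀ x y, v (x * y) = v x + v y) {δ ε : Γ} {x y : M}
    (hx : x ∈ band v δ) (hy : y ∈ band v ε) : x * y ∈ band v (δ + ε) := by
  rw [mem_band, hv, neg_add]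
  exact ⟨add_lt_add hx.1 hy.1, add_lt_add hx.2 hy.2⟩

theorem mem_band_of_mul_self_mem (hv : ∀ x y, v (x * y) = v x + v y) {δ : Γ} {s : M}
    (hs : s * s ∈ band v (δ + δ)) : s ∈ band v δ := by
  rw [mem_band, hv, neg_add] at hs
  have halve {a b : Γ} (h : a + a < b + b) : a < b := by simpa [← two_nsmul] using h
  exact ⟨halve hs.1, halve hs.2⟩

theorem exists_mul_eq_of_mem_band_add_self (hv : ∀ x y, v (x * y) = v x + v y)
    (hsq : ∀ z : M, IsSquare z) {δ : Γ} {z : M} (hz : z ∈ band v (δ + δ)) :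
    ∃ x y, x ∈ band v δ ∧ y ∈ band v δ ∧ z = x * y := by
  obtain ⟨s, rfl⟩ := hsq z
  have hs := mem_band_of_mul_self_mem hv hz
  exact ⟨s, s, hs, hs, rfl⟩

theorem add_eq_add_self_of_mul_eq_mul_self (hv : ∀ x y, v (x * y) = v x + v y) {δ : Γ}
    {ψ : M → G} (hψ : IsLocalHomOn ψ (band v δ)) {x y s : M} (hx : x ∈ band v δ)
    (hy : y ∈ band v δ) (hs : s ∈ band v δ) (hxy : s * s = x * y) :
    ψ x + ψ y = ψ s + ψ s := by
  set u := x * s⁻¹ with hu_def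
  have hu_sq : u * u = x * y⁻¹ := by
    calc u * u = x * x * (s * s)⁻¹ := by rw [hu_def, mul_inv]; ac_rfl
      _ = x * y⁻¹ := by rw [hxy, mul_inv, mul_assoc, mul_inv_cancel_left]
  have hu : u ∈ band v δ :=
    mem_band_of_mul_self_mem hv (hu_sq ▸ mul_mem_band_add hv hx (inv_mem_band hv hy))
  have hx_eq : u * s = x := inv_mul_cancel_right x s
  have hy_eq : u⁻¹ * s = y := by
    calc u⁻¹ * s = s * s * x⁻¹ := by rw [hu_def, mul_inv, inv_inv]; ac_rfl
      _ = y := by rw [hxy, mul_inv_cancel_comm]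
  have hψx : ψ x = ψ u + ψ s := hx_eq ▸ hψ u s hu hs (hx_eq ▸ hx)
  have hψy : ψ y = ψ u⁻¹ + ψ s := hy_eq ▸ hψ u⁻¹ s (inv_mem_band hv hu) hs (hy_eq ▸ hy)
  rw [hψx, hψy, add_add_add_comm,
    hψ.map_add_map_inv (one_mem_band hv hu) hu (inv_mem_band hv hu), zero_add]

theorem add_eq_add_of_mul_eq_mul (hv : ∀ x y, v (x * y) = v x + v y)
    (hsq : ∀ z : M, IsSquare z) {δ : Γ} {ψ : M → G} (hψ : IsLocalHomOn ψ (band v δ))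
    {x y x' y' : M} (hx : x ∈ band v δ) (hy : y ∈ band v δ) (hx' : x' ∈ band v δ)
    (hy' : y' ∈ band v δ) (hxy : x * y = x' * y') : ψ x + ψ y = ψ x' + ψ y' := by
  obtain ⟨s, hs_sq⟩ := hsq (x * y)
  have hs : s ∈ band v δ := mem_band_of_mul_self_mem hv (hs_sq ▸ mul_mem_band_add hv hx hy)
  rw [add_eq_add_self_of_mul_eq_mul_self hv hψ hx hy hs hs_sq.symm,
    add_eq_add_self_of_mul_eq_mul_self hv hψ hx' hy' hs (hxy ▸ hs_sq).symm]

theorem isLocalHomOn_band_add_self (hv : ∀ x y, v (x * y) = v x + v y)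
    (hsq : ∀ z : M, IsSquare z) {δ : Γ} {ψ ψbar : M → G} (hψ : IsLocalHomOn ψ (band v δ))
    (hψbar : ∀ x y, x ∈ band v δ → y ∈ band v δ → ψbar (x * y) = ψ x + ψ y) :
    IsLocalHomOn ψbar (band v (δ + δ)) := by
  intro z w hz hw hzw
  obtain ⟨s, rfl⟩ := hsq z
  obtain ⟨t, rfl⟩ := hsq w
  have hs := mem_band_of_mul_self_mem hv hz
  have ht := mem_band_of_mul_self_mem hv hw
  rw [mul_mul_mul_comm] at hzw ⊢
  have hst := mem_band_of_mul_self_mem hv hzw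
  rw [hψbar _ _ hst hst, hψbar _ _ hs hs, hψbar _ _ ht ht, hψ s t hs ht hst, add_add_add_comm]

end LocalHom

theorem IsAlgClosed.isSquare_units {K : Type*} [Field K] [IsAlgClosed K] (z : Kˣ) :
    IsSquare z := by
  obtain ⟨r, hr⟩ := IsAlgClosed.exists_eq_mul_self (z : K)
  have hr0 : r ≠ 0 := by
    rintro rfl
    exact z.ne_zero (hr.trans (mul_zero 0))
  exact ⟨Units.mk0 r hr0, Units.ext hr⟩

theorem local_homomorphism_extends_general
    {K : Type*} [Field K] [IsAlgClosed K]
    {Γ : Type*} [AddCommGroup Γ] [LinearOrder Γ] [IsOrderedAddMonoid Γ]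
    (v : Kˣ → Γ) (hv : ∀ x y : Kˣ, v (x * y) = v x + v y)
    (δ : Γ)
    {G : Type*} [AddCommGroup G] (ψ : Kˣ → G)
    (hψ : ∀ x y : Kˣ, (-δ < v x ∧ v x < δ) → (-δ < v y ∧ v y < δ) →
      (-δ < v (x * y) ∧ v (x * y) < δ) → ψ (x * y) = ψ x + ψ y) :
    (∀ z : Kˣ, (-(δ + δ) < v z ∧ v z < δ + δ) →
      ∃ x y : Kˣ, (-δ < v x ∧ v x < δ) ∧ (-δ < v y ∧ v y < δ) ∧ z = x * y) ∧
    (∀ x y x' y' : Kˣ, (-δ < v x ∧ v x < δ) → (-δ < v y ∧ v y < δ) →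
      (-δ < v x' ∧ v x' < δ) → (-δ < v y' ∧ v y' < δ) →
      x * y = x' * y' → ψ x + ψ y = ψ x' + ψ y') ∧
    (∀ ψbar : Kˣ → G,
      (∀ x y : Kˣ, (-δ < v x ∧ v x < δ) → (-δ < v y ∧ v y < δ) →
        ψbar (x * y) = ψ x + ψ y) →
      ∀ z w : Kˣ, (-(δ + δ) < v z ∧ v z < δ + δ) → (-(δ + δ) < v w ∧ v w < δ + δ) →
        (-(δ + δ) < v (z * w) ∧ v (z * w) < δ + δ) →
        ψbar (z * w) = ψbar z + ψbar w) :=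
  ⟨fun _ hz => LocalHom.exists_mul_eq_of_mem_band_add_self hv IsAlgClosed.isSquare_units hz,
    fun _ _ _ _ => LocalHom.add_eq_add_of_mul_eq_mul hv IsAlgClosed.isSquare_units hψ,
    fun _ hψbar => LocalHom.isLocalHomOn_band_add_self hv IsAlgClosed.isSquare_units hψ hψbar⟩

/-- Let `K` be an algebraically closed field with a valuation `v : Kˣ → Γ` to a linearly
ordered abelian group, `δ > 0`, `X_δ = {x : -δ < v x < δ}` and
`X_{2δ} = {x : -2δ < v x < 2δ}`. Let `ψ : X_δ → G` be a local homomorphism to an abelian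
group `G`. Then: (1) every `z ∈ X_{2δ}` factors as `z = x·y` with `x, y ∈ X_δ`;
(2) `ψ x + ψ y` only depends on the product `x·y`; (3) the induced map
`ψ̄(x·y) = ψ x + ψ y` is a local homomorphism on `X_{2δ}`. -/
theorem local_homomorphism_extends
    {K : Type*} [Field K] [IsAlgClosed K]
    {Γ : Type*} [AddCommGroup Γ] [LinearOrder Γ] [IsOrderedAddMonoid Γ]
    (v : Kˣ → Γ) (hv : ∀ x y : Kˣ, v (x * y) = v x + v y)
    (δ : Γ) (hδ : 0 < δ)
    {G : Type*} [AddCommGroup G] (ψ : Kˣ → G)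
    (hψ : ∀ x y : Kˣ, (-δ < v x ∧ v x < δ) → (-δ < v y ∧ v y < δ) →
      (-δ < v (x * y) ∧ v (x * y) < δ) → ψ (x * y) = ψ x + ψ y) :
    (∀ z : Kˣ, (-(δ + δ) < v z ∧ v z < δ + δ) →
      ∃ x y : Kˣ, (-δ < v x ∧ v x < δ) ∧ (-δ < v y ∧ v y < δ) ∧ z = x * y) ∧
    (∀ x y x' y' : Kˣ, (-δ < v x ∧ v x < δ) → (-δ < v y ∧ v y < δ) →
      (-δ < v x' ∧ v x' < δ) → (-δ < v y' ∧ v y' < δ) →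
      x * y = x' * y' → ψ x + ψ y = ψ x' + ψ y') ∧
    (∀ ψbar : Kˣ → G,
      (∀ x y : Kˣ, (-δ < v x ∧ v x < δ) → (-δ < v y ∧ v y < δ) →
        ψbar (x * y) = ψ x + ψ y) →
      ∀ z w : Kˣ, (-(δ + δ) < v z ∧ v z < δ + δ) → (-(δ + δ) < v w ∧ v w < δ + δ) →
        (-(δ + δ) < v (z * w) ∧ v (z * w) < δ + δ) →
        ψbar (z * w) = ψbar z + ψbar w) :=
  local_homomorphism_extends_general v hv δ ψ hψ
end

section
/- Let K be an algebraically closed field of prime characteristic p and let L be a finite subgroup of the additive group (K, +). Then the map φ(x) := ∏_{l ∈ L} (x − l) is a surjective additive group endomorphism of (K, +) whose kernel is exactly L; consequently, the quotient group K/L is isomorphic to (K, +). -/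
/-!
The map `φ` is `L`-periodic and vanishes on `L`, so for fixed `x` the polynomial
`φ(X + x) - φ(X)` takes the constant value `φ(x)` at the `|L|` points of `L`. Its degree is
below `|L| = deg φ` because `φ` is monic, hence it is the constant `φ(x)`: this is additivity.
The kernel of `φ` is its set of roots `L`, and `φ` is onto because `K` is algebraically closed.
-/

open Polynomial Finset

theorem Polynomial.IsMonicOfDegree.eval_add_of_periodic {R : Type*} [CommRing R] [IsDomain R]
    {f : R[X]} {n : ℕ} (hf : IsMonicOfDegree f n) (hn : n ≠ 0) {s : Finset R} (hcard : n ≤ #s)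
    (hroot : ∀ l ∈ s, f.eval l = 0) (hper : ∀ x, ∀ l ∈ s, f.eval (l + x) = f.eval x)
    (x y : R) : f.eval (x + y) = f.eval x + f.eval y := by
  have hdiff : (taylor x f - f).natDegree < n := (hf.aeval_add x).natDegree_sub_lt hn hf
  have hconst : taylor x f - f = C (f.eval x) :=
    eq_of_natDegree_lt_card_of_eval_eq' _ _ s
      (fun l hl => by simp [taylor_eval, hper x l hl, hroot l hl])
      (by simpa using hdiff.trans_le hcard)
  have := congrArg (eval y) hconst
  rw [eval_sub, taylor_eval, eval_C] at this
  rw [add_comm, ← this, sub_add_cancel]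

namespace AddSubgroup

variable {R : Type*} [CommRing R] (L : AddSubgroup R) (hL : (L : Set R).Finite)

theorem zero_mem_toFinset : (0 : R) ∈ hL.toFinset := hL.mem_toFinset.2 L.zero_mem

theorem prod_add_sub_eq_of_mem {y : R} (hy : y ∈ L) (x : R) :
    ∏ l ∈ hL.toFinset, (x + y - l) = ∏ l ∈ hL.toFinset, (x - l) :=
  prod_nbij' (· - y) (· + y)
    (fun l hl => by simpa using L.sub_mem (by simpa using hl) hy)
    (fun l hl => by simpa using L.add_mem (by simpa using hl) hy)
    (fun l _ => by simp) (fun l _ => by simp) (fun l _ => by ring)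

theorem prod_add_sub_eq_add [IsDomain R] (x y : R) :
    ∏ l ∈ hL.toFinset, (x + y - l) = ∏ l ∈ hL.toFinset, (x - l) + ∏ l ∈ hL.toFinset, (y - l) := by
  have hf : IsMonicOfDegree (Lagrange.nodal hL.toFinset id) #hL.toFinset :=
    ⟨Lagrange.natDegree_nodal, Lagrange.nodal_monic⟩
  simpa only [Lagrange.eval_nodal, id] using
    hf.eval_add_of_periodic (card_ne_zero_of_mem (L.zero_mem_toFinset hL)) le_rfl
      (fun l hl => Lagrange.eval_nodal_at_node (v := id) hl)
      (fun z l hl => by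
        simp only [Lagrange.eval_nodal, id, add_comm l]
        exact L.prod_add_sub_eq_of_mem hL (by simpa using hl) z)
      x y

noncomputable def prodSubHom [IsDomain R] : R →+ R where
  toFun x := ∏ l ∈ hL.toFinset, (x - l)
  map_zero' := prod_eq_zero (L.zero_mem_toFinset hL) (sub_self 0)
  map_add' := L.prod_add_sub_eq_add hL

theorem prodSubHom_apply [IsDomain R] (x : R) :
    L.prodSubHom hL x = ∏ l ∈ hL.toFinset, (x - l) := rfl

theorem ker_prodSubHom [IsDomain R] : (L.prodSubHom hL).ker = L := by
  ext x
  simp [AddMonoidHom.mem_ker, prodSubHom_apply, prod_eq_zero_iff, sub_eq_zero]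

theorem prodSubHom_surjective {K : Type*} [Field K] [IsAlgClosed K] (L : AddSubgroup K)
    (hL : (L : Set K).Finite) : Function.Surjective (L.prodSubHom hL) := by
  have hsurj := IsAlgClosed.eval_surjective (p := Lagrange.nodal hL.toFinset id) <| by
    rw [Lagrange.natDegree_nodal]
    exact card_ne_zero_of_mem (L.zero_mem_toFinset hL)
  intro c
  obtain ⟨x, hx⟩ := hsurj c
  exact ⟨x, Lagrange.eval_nodal.symm.trans hx⟩

end AddSubgroup

theorem additive_quotient_finite_subgroup_iso_general
    {K : Type*} [Field K] [IsAlgClosed K]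
    (L : AddSubgroup K) (hL : (L : Set K).Finite) :
    (∀ x y : K, (∏ l ∈ hL.toFinset, (x + y - l))
        = (∏ l ∈ hL.toFinset, (x - l)) + ∏ l ∈ hL.toFinset, (y - l)) ∧
    Function.Surjective (fun x : K => ∏ l ∈ hL.toFinset, (x - l)) ∧
    (∀ x : K, (∏ l ∈ hL.toFinset, (x - l)) = 0 ↔ x ∈ L) ∧
    Nonempty ((K ⧸ L) ≃+ K) := by
  refine ⟨L.prod_add_sub_eq_add hL, L.prodSubHom_surjective hL, fun x => ?_, ?_⟩
  · rw [← L.prodSubHom_apply hL, ← AddMonoidHom.mem_ker, L.ker_prodSubHom hL]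
  · exact ⟨(QuotientAddGroup.quotientAddEquivOfEq (L.ker_prodSubHom hL).symm).trans
      (QuotientAddGroup.quotientKerEquivOfSurjective _ (L.prodSubHom_surjective hL))⟩

/-- Let `K` be an algebraically closed field of prime characteristic `p` and `L` a finite
subgroup of `(K, +)`. Then `φ(x) = ∏_{l ∈ L} (x - l)` is a surjective additive group
endomorphism of `(K, +)` with kernel exactly `L`; consequently `K/L ≅ (K, +)`. -/
theorem additive_quotient_finite_subgroup_iso
    {K : Type*} [Field K] [IsAlgClosed K]
    (p : ℕ) [Fact p.Prime] [CharP K p]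
    (L : AddSubgroup K) (hL : (L : Set K).Finite) :
    (∀ x y : K, (∏ l ∈ hL.toFinset, (x + y - l))
        = (∏ l ∈ hL.toFinset, (x - l)) + ∏ l ∈ hL.toFinset, (y - l)) ∧
    Function.Surjective (fun x : K => ∏ l ∈ hL.toFinset, (x - l)) ∧
    (∀ x : K, (∏ l ∈ hL.toFinset, (x - l)) = 0 ↔ x ∈ L) ∧
    Nonempty ((K ⧸ L) ≃+ K) :=
  additive_quotient_finite_subgroup_iso_general L hL
end
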